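/- Let G be a finite simple graph of order n with r = χ(G), where n is NOT congruent to r − 1 modulo r, and suppose es_χ(G) = ⌊n/r⌋². Then for every proper coloring of G with exactly r color classes C_1, …, C_r ordered so that |C_1| ≤ ⋯ ≤ |C_r|, the following hold for each i: if |C_i| = ⌊n/r⌋, then every vertex v ∈ C_i and every j ∈ {1, …, r} \ {i} satisfy e(v, C_j) ≥ ⌊n/r⌋; and if |C_i| > ⌊n/r⌋, then Σ_{v_s ∈ C_i} ℓ_s ≥ ⌊n/r⌋², where for each v_s ∈ C_i, ℓ_s = min{ e(v_s, C_j) : j ∈ {1, …, r} \ {i} } and e(v, C_j) is the number of edges from v to vertices of C_j. -/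

import Mathlib

open Function

/-- The chromatic-stability index: the minimum number of edges whose removal
decreases the chromatic number (0 if no such edge set exists, e.g. for edgeless graphs). -/
noncomputable def esChi {V : Type*} [Fintype V] (G : SimpleGraph V) : ℕ :=
  sInf {k | ∃ F : Finset (Sym2 V),
    ↑F ⊆ G.edgeSet ∧ F.card = k ∧
    (G.deleteEdges ↑F).chromaticNumber < G.chromaticNumber}

open scoped Classical in
/-- The color class of color `i` under the coloring `c`, as a `Finset`. -/
noncomputable def classOf {V : Type*} [Fintype V] {G : SimpleGraph V} {α : Type*}
    (c : G.Coloring α) (i : α) : Finset V :=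
  Finset.univ.filter fun v => c v = i

open scoped Classical in
/-- The number of edges of `G` with one endpoint in `A` and the other in `B`
(for disjoint `A`, `B`). -/
noncomputable def eCC {V : Type*} [Fintype V] (G : SimpleGraph V) (A B : Finset V) : ℕ :=
  ((A ×ˢ B).filter fun p => G.Adj p.1 p.2).card

/-- `c*`: the minimum size of a color class over all proper colorings of `G`
using exactly `χ(G)` colors. -/
noncomputable def cStar {V : Type*} [Fintype V] (G : SimpleGraph V) : ℕ :=
  sInf {k | ∃ (c : G.Coloring (Fin G.chromaticNumber.toNat))
      (i : Fin G.chromaticNumber.toNat),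
    Surjective c ∧ k = (classOf c i).card}

/-- The chromatic bondage number: the minimum number of edges between two distinct
color classes, over all proper colorings of `G` using exactly `χ(G)` colors. -/
noncomputable def rhoChi {V : Type*} [Fintype V] (G : SimpleGraph V) : ℕ :=
  sInf {k | ∃ (c : G.Coloring (Fin G.chromaticNumber.toNat))
      (i j : Fin G.chromaticNumber.toNat),
    Surjective c ∧ i ≠ j ∧ k = eCC G (classOf c i) (classOf c j)}

/-! Recolor every vertex `v` of a class `C_i` with the colour `j ≠ i` minimising `e(v, C_j)`,
after deleting the `ℓ_v` edges from `v` into `C_j`. This turns an `r`-colouring into an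
`(r - 1)`-colouring at the cost of `Σ_{v ∈ C_i} ℓ_v` edges, so `⌊n/r⌋² = es_χ(G) ≤ Σ_{v ∈ C_i} ℓ_v`.
If moreover `|C_i| = ⌊n/r⌋`, then `n ≢ r - 1 (mod r)` forces a second class of size at most
`⌊n/r⌋`, so every `ℓ_w ≤ ⌊n/r⌋`; a vertex `v` with `e(v, C_j) < ⌊n/r⌋` would then push the sum
below `|C_i| ⌊n/r⌋ = ⌊n/r⌋²`. -/

open Finset

lemma exists_ne_le_div_of_sum_eq {α : Type*} [Fintype α] (s : α → ℕ) {n : ℕ}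
    (hsum : ∑ k, s k = n) (hmod : n % Fintype.card α ≠ Fintype.card α - 1) {i : α}
    (hi : n / Fintype.card α ≤ s i) : ∃ k ≠ i, s k ≤ n / Fintype.card α := by
  classical
  by_contra! hbig
  set r := Fintype.card α
  set q := n / r
  have hothers : (r - 1) * (q + 1) ≤ ∑ k ∈ univ.erase i, s k := by
    simpa [r] using card_nsmul_le_sum (univ.erase i) s (q + 1)
      fun k hk => hbig k (ne_of_mem_erase hk)
  have hsplit : s i + ∑ k ∈ univ.erase i, s k = n :=
    (add_sum_erase univ s (mem_univ i)).trans hsum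
  have hr : 0 < r := Fintype.card_pos_iff.2 ⟨i⟩
  have hdiv : r * q + n % r = n := Nat.div_add_mod n r
  have hmodlt : n % r < r := Nat.mod_lt n hr
  obtain ⟨m, hm⟩ : ∃ m, r = m + 1 := ⟨r - 1, by omega⟩
  rw [hm] at hothers hdiv hmod hmodlt
  simp only [Nat.add_sub_cancel] at hothers hmod
  have : m ≤ n % (m + 1) := by nlinarith
  omega

section Coloring

variable {V α : Type*} [Fintype V] {G : SimpleGraph V}

lemma sum_card_classOf [Fintype α] (c : G.Coloring α) :
    ∑ k, (classOf c k).card = Fintype.card V := by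
  classical
  rw [← card_univ, card_eq_sum_card_fiberwise (f := c) (t := univ) fun _ _ => mem_univ _]
  rfl

open scoped Classical in
lemma eCC_singleton_le_card (v : V) (B : Finset V) : eCC G {v} B ≤ B.card :=
  (card_filter_le _ _).trans_eq (by simp)

/-- `ℓ_v`, for `v` in the class of `i`. -/
noncomputable def minDegToOtherClass (c : G.Coloring α) (i : α) (v : V) : ℕ :=
  sInf {k : ℕ | ∃ j : α, j ≠ i ∧ k = eCC G {v} (classOf c j)}

lemma minDegToOtherClass_le (c : G.Coloring α) {i j : α} (hji : j ≠ i) (v : V) :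
    minDegToOtherClass c i v ≤ eCC G {v} (classOf c j) :=
  Nat.sInf_le ⟨j, hji, rfl⟩

lemma exists_minDegToOtherClass_eq [Nontrivial α] (c : G.Coloring α) (i : α) (v : V) :
    ∃ j ≠ i, minDegToOtherClass c i v = eCC G {v} (classOf c j) :=
  Nat.sInf_mem (s := {k : ℕ | ∃ j : α, j ≠ i ∧ k = eCC G {v} (classOf c j)})
    (let ⟨j, hj⟩ := exists_ne i; ⟨_, j, hj, rfl⟩)

open scoped Classical in
noncomputable def recolorEdges (c : G.Coloring α) (i : α) (f : V → α) : Finset (Sym2 V) :=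
  (classOf c i).biUnion fun v =>
    (({v} ×ˢ classOf c (f v)).filter fun p => G.Adj p.1 p.2).image fun p => s(p.1, p.2)

lemma recolorEdges_subset_edgeSet (c : G.Coloring α) (i : α) (f : V → α) :
    ↑(recolorEdges c i f) ⊆ G.edgeSet := by
  intro e he
  simp only [recolorEdges, mem_coe, mem_biUnion, mem_image, mem_filter] at he
  obtain ⟨_, _, p, ⟨_, hadj⟩, rfl⟩ := he
  exact hadj

lemma mk_mem_recolorEdges (c : G.Coloring α) {i : α} {f : V → α} {v w : V}
    (hv : c v = i) (hw : c w = f v) (hadj : G.Adj v w) : s(v, w) ∈ recolorEdges c i f := by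
  simp only [recolorEdges, mem_biUnion, mem_image, mem_filter, mem_product, mem_singleton]
  exact ⟨v, by simp [classOf, hv], (v, w), ⟨⟨rfl, by simp [classOf, hw]⟩, hadj⟩, rfl⟩

lemma card_recolorEdges_le (c : G.Coloring α) (i : α) (f : V → α) :
    (recolorEdges c i f).card ≤ ∑ v ∈ classOf c i, eCC G {v} (classOf c (f v)) := by
  classical
  exact card_biUnion_le.trans (sum_le_sum fun _ _ => card_image_le)

noncomputable def recolorClass [DecidableEq α] (c : G.Coloring α) (i : α) (f : V → α)
    (hf : ∀ v, f v ≠ i) :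
    (G.deleteEdges ↑(recolorEdges c i f)).Coloring {j : α // j ≠ i} :=
  SimpleGraph.Coloring.mk (fun v => if h : c v = i then ⟨f v, hf v⟩ else ⟨c v, h⟩) <| by
    intro v w hvw
    obtain ⟨hadj, hnot⟩ := SimpleGraph.deleteEdges_adj.1 hvw
    have hne : c v ≠ c w := c.valid hadj
    by_cases hv : c v = i <;> by_cases hw : c w = i <;>
      simp only [hv, hw, dite_true, dite_false, ne_eq, Subtype.mk.injEq]
    · exact absurd (hv.trans hw.symm) hne
    · exact fun h => hnot (mk_mem_recolorEdges c hv h.symm hadj)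
    · exact fun h => hnot (Sym2.eq_swap ▸ mk_mem_recolorEdges c hw h hadj.symm)
    · exact hne

lemma esChi_le_sum_minDegToOtherClass [Fintype α] [Nontrivial α] (c : G.Coloring α)
    (hχ : G.chromaticNumber = Fintype.card α) (i : α) :
    esChi G ≤ ∑ v ∈ classOf c i, minDegToOtherClass c i v := by
  classical
  choose f hfi hf using exists_minDegToOtherClass_eq c i
  have hcolorable : (G.deleteEdges ↑(recolorEdges c i f)).Colorable (Fintype.card α - 1) := by
    simpa using (recolorClass c i f hfi).colorable
  have hlt : (G.deleteEdges ↑(recolorEdges c i f)).chromaticNumber < G.chromaticNumber := by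
    rw [hχ]
    refine hcolorable.chromaticNumber_le.trans_lt ?_
    exact_mod_cast Nat.sub_lt Fintype.card_pos one_pos
  calc esChi G ≤ (recolorEdges c i f).card :=
        Nat.sInf_le ⟨_, recolorEdges_subset_edgeSet c i f, rfl, hlt⟩
    _ ≤ ∑ v ∈ classOf c i, minDegToOtherClass c i v := by
        simpa only [hf] using card_recolorEdges_le c i f

end Coloring

/-- If `n ≢ r − 1 (mod r)` where `r = χ(G)` and `es_χ(G) = ⌊n/r⌋²`,
then in every proper coloring of `G` with exactly `r` color classes ordered by
nondecreasing size: for each `i`, if `|C_i| = ⌊n/r⌋` then every `v ∈ C_i` sends at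
least `⌊n/r⌋` edges to each other class; and if `|C_i| > ⌊n/r⌋` then
`Σ_{v ∈ C_i} ℓ_v ≥ ⌊n/r⌋²`, where `ℓ_v = min{e(v, C_j) : j ≠ i}`. -/
theorem extremal_coloring_edge_sums {V : Type*} [Fintype V] (G : SimpleGraph V)
    (r : ℕ) (hchi : G.chromaticNumber = r)
    (hmod : Fintype.card V % r ≠ r - 1)
    (hes : esChi G = (Fintype.card V / r) ^ 2) :
    ∀ c : G.Coloring (Fin r), Surjective c →
      (∀ i j : Fin r, i ≤ j → (classOf c i).card ≤ (classOf c j).card) →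
      ∀ i : Fin r,
        ((classOf c i).card = Fintype.card V / r →
          ∀ v ∈ classOf c i, ∀ j : Fin r, j ≠ i →
            Fintype.card V / r ≤ eCC G {v} (classOf c j)) ∧
        (Fintype.card V / r < (classOf c i).card →
          (Fintype.card V / r) ^ 2 ≤
            ∑ v ∈ classOf c i,
              sInf {k : ℕ | ∃ j : Fin r, j ≠ i ∧ k = eCC G {v} (classOf c j)}) := by
  intro c _ _ i
  have : Nontrivial (Fin r) := Fin.nontrivial_iff_two_le.2 <| by
    rcases r with _ | _ | r
    exacts [i.elim0, absurd (Nat.mod_one _) hmod, by omega]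
  have hsum := hes ▸ esChi_le_sum_minDegToOtherClass c (by simpa using hchi) i
  refine ⟨fun hci v hv j hji => ?_, fun _ => hsum⟩
  by_contra! hlt
  obtain ⟨k, hki, hk⟩ := exists_ne_le_div_of_sum_eq (fun k => (classOf c k).card)
    (sum_card_classOf c) (by simpa using hmod) (i := i) (by simp [hci])
  rw [Fintype.card_fin] at hk
  have hsmall : ∑ w ∈ classOf c i, minDegToOtherClass c i w
      < ∑ _w ∈ classOf c i, Fintype.card V / r :=
    sum_lt_sum
      (fun w _ => (minDegToOtherClass_le c hki w).trans ((eCC_singleton_le_card w _).trans hk))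
      ⟨v, hv, (minDegToOtherClass_le c hji v).trans_lt hlt⟩
  rw [sum_const, hci, smul_eq_mul, ← sq] at hsmall
  exact absurd hsum hsmall.not_ge
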